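/- Let k ≥ 2 and n₁,…,n_k ≥ 2 be integers, n = n₁+⋯+n_k, fix i ∈ {1,…,k}, and let p ≠ 0 with p < nᵢ, μ ∈ ℝ and σ > 0. Let X and T be independent with X ~ Exp(μ, σ/nᵢ) and T ~ Gamma(n−k, σ). Then the function β ↦ Linex risk at (μ, σ) of X + β·T is finite on {β ∈ ℝ : p·β < 1} and attains a strict global minimum there at β₀ᵢ = (1/p)·(1 − (nᵢ/(nᵢ−p))^{1/(n−k+1)}). Thus X + β₀ᵢ·T is the best affine equivariant estimator of μ under Linex loss in the common-unknown-scale model. -/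

import Mathlib

open MeasureTheory ProbabilityTheory Real
open scoped ENNReal

/-- Two-parameter exponential distribution `Exp(μ, θ)` with location `μ` and scale `θ`. -/
noncomputable def expLocMeasure (μ θ : ℝ) : Measure ℝ :=
  volume.withDensity fun x =>
    ENNReal.ofReal (if μ < x then θ⁻¹ * Real.exp (-(x - μ) / θ) else 0)

/-- Gamma distribution `Gamma(a, θ)` with shape `a` and scale `θ`. -/
noncomputable def gammaScaleMeasure (a θ : ℝ) : Measure ℝ :=
  volume.withDensity fun x =>
    ENNReal.ofReal (if 0 < x then x ^ (a - 1) * Real.exp (-x / θ) / (Real.Gamma a * θ ^ a) else 0)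

/-- The Linex loss `e^{pt} - pt - 1`. -/
noncomputable def linexLoss (p t : ℝ) : ℝ := Real.exp (p * t) - p * t - 1

/-- The Linex risk of an estimator `δ` of a location parameter `μ` at scale `σ`,
with values in `[0, ∞]`. -/
noncomputable def linexRisk {Ω : Type*} [MeasurableSpace Ω] (P : Measure Ω)
    (p μ σ : ℝ) (δ : Ω → ℝ) : ℝ≥0∞ :=
  ∫⁻ ω, ENNReal.ofReal (linexLoss p ((δ ω - μ) / σ)) ∂P

/-!
`X - μ ~ Gamma(1, σ/nᵢ)` and `T ~ Gamma(m, σ)` with `m = n - k` are independent, and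
`Gamma(a, θ)` has moment generating function `c ↦ (1 - cθ)^(-a)` for `cθ < 1`. Hence, with
`u = 1 - pβ > 0` and `c = nᵢ/(nᵢ - p)`, the Linex risk of `X + βT` is
`c·u^(-m) + m·u - m - p/nᵢ - 1`. Weighted AM–GM applied to `c·u^(-m)` and `u` with weights
`1/(m+1)` and `m/(m+1)` gives `c·u^(-m) + m·u ≥ (m+1)·c^(1/(m+1))`, with equality only at
`u = c^(1/(m+1))`, that is at `β = β₀ᵢ`.
-/

open Set

lemma sub_pos_of_lt_inv_of_mul_lt {θ c : ℝ} (hθ : 0 < θ) (hc : c * θ < 1) : 0 < θ⁻¹ - c := by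
  rw [sub_pos, ← one_div, lt_div_iff₀ hθ]
  exact hc

section GammaScale

variable {a θ : ℝ}

lemma gammaScaleMeasure_eq_withDensity_Ioi (a θ : ℝ) :
    gammaScaleMeasure a θ = (volume.restrict (Ioi 0)).withDensity fun x =>
      ENNReal.ofReal (x ^ (a - 1) * Real.exp (-x / θ) / (Real.Gamma a * θ ^ a)) := by
  rw [gammaScaleMeasure, ← withDensity_indicator measurableSet_Ioi]
  congr 1
  funext x
  by_cases hx : 0 < x <;> simp [hx]

lemma gammaScale_density_nonneg (ha : 0 < a) (hθ : 0 < θ) {x : ℝ} (hx : 0 < x) :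
    0 ≤ x ^ (a - 1) * Real.exp (-x / θ) / (Real.Gamma a * θ ^ a) := by
  have := Real.Gamma_pos_of_pos ha
  positivity

lemma integrable_gammaScaleMeasure_iff (ha : 0 < a) (hθ : 0 < θ) {g : ℝ → ℝ} :
    Integrable g (gammaScaleMeasure a θ) ↔ IntegrableOn
      (fun x => g x * (x ^ (a - 1) * Real.exp (-x / θ) / (Real.Gamma a * θ ^ a))) (Ioi 0) := by
  rw [gammaScaleMeasure_eq_withDensity_Ioi, integrable_withDensity_iff (by fun_prop)
    (.of_forall fun _ => ENNReal.ofReal_lt_top), IntegrableOn]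
  refine integrable_congr ((ae_restrict_mem measurableSet_Ioi).mono fun x hx => ?_)
  dsimp only
  rw [ENNReal.toReal_ofReal (gammaScale_density_nonneg ha hθ hx)]

lemma integral_gammaScaleMeasure (ha : 0 < a) (hθ : 0 < θ) (g : ℝ → ℝ) :
    ∫ x, g x ∂gammaScaleMeasure a θ =
      ∫ x in Ioi 0, g x * (x ^ (a - 1) * Real.exp (-x / θ) / (Real.Gamma a * θ ^ a)) := by
  rw [gammaScaleMeasure_eq_withDensity_Ioi, integral_withDensity_eq_integral_toReal_smul
    (by fun_prop) (.of_forall fun _ => ENNReal.ofReal_lt_top)]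
  refine setIntegral_congr_fun measurableSet_Ioi fun x hx => ?_
  rw [ENNReal.toReal_ofReal (gammaScale_density_nonneg ha hθ hx), smul_eq_mul, mul_comm]

lemma rpow_mul_exp_mul_gammaScale_density {x : ℝ} (hx : 0 < x) (j c : ℝ) :
    x ^ j * Real.exp (c * x) * (x ^ (a - 1) * Real.exp (-x / θ) / (Real.Gamma a * θ ^ a)) =
      (Real.Gamma a * θ ^ a)⁻¹ * (x ^ (a + j - 1) * Real.exp (-((θ⁻¹ - c) * x))) := by
  rw [show a + j - 1 = j + (a - 1) by ring, Real.rpow_add hx,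
    show -((θ⁻¹ - c) * x) = c * x + -x / θ by ring, Real.exp_add]
  ring

lemma integrable_rpow_mul_exp_gammaScaleMeasure (ha : 0 < a) (hθ : 0 < θ) {j c : ℝ}
    (hj : 0 ≤ j) (hc : c * θ < 1) :
    Integrable (fun x => x ^ j * Real.exp (c * x)) (gammaScaleMeasure a θ) := by
  have hr : 0 < θ⁻¹ - c := sub_pos_of_lt_inv_of_mul_lt hθ hc
  rw [integrable_gammaScaleMeasure_iff ha hθ]
  have h : IntegrableOn (fun x => (Real.Gamma a * θ ^ a)⁻¹ *
      (x ^ (a + j - 1) * Real.exp (-(θ⁻¹ - c) * x ^ (1 : ℝ)))) (Ioi 0) :=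
    (integrableOn_rpow_mul_exp_neg_mul_rpow (by linarith) one_pos hr).const_mul _
  refine h.congr_fun (fun x hx => ?_) measurableSet_Ioi
  rw [rpow_mul_exp_mul_gammaScale_density hx]
  simp only [Real.rpow_one, neg_mul]

lemma integral_rpow_mul_exp_gammaScaleMeasure (ha : 0 < a) (hθ : 0 < θ) {j c : ℝ}
    (hj : 0 ≤ j) (hc : c * θ < 1) :
    ∫ x, x ^ j * Real.exp (c * x) ∂gammaScaleMeasure a θ =
      Real.Gamma (a + j) / Real.Gamma a * θ ^ j * (1 - c * θ) ^ (-(a + j)) := by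
  have hr : 0 < θ⁻¹ - c := sub_pos_of_lt_inv_of_mul_lt hθ hc
  rw [integral_gammaScaleMeasure ha hθ, setIntegral_congr_fun measurableSet_Ioi
    fun x hx => rpow_mul_exp_mul_gammaScale_density hx j c, integral_const_mul,
    integral_rpow_mul_exp_neg_mul_Ioi (by linarith) hr]
  have h1c : 0 < 1 - c * θ := by linarith
  rw [show θ⁻¹ - c = (1 - c * θ) / θ by field_simp, one_div_div, Real.div_rpow hθ.le h1c.le,
    Real.rpow_add hθ, Real.rpow_neg h1c.le]
  field_simp

lemma integral_exp_mul_gammaScaleMeasure (ha : 0 < a) (hθ : 0 < θ) {c : ℝ} (hc : c * θ < 1) :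
    Integrable (fun x => Real.exp (c * x)) (gammaScaleMeasure a θ) ∧
      ∫ x, Real.exp (c * x) ∂gammaScaleMeasure a θ = (1 - c * θ) ^ (-a) := by
  simpa [(Real.Gamma_pos_of_pos ha).ne'] using
    And.intro (integrable_rpow_mul_exp_gammaScaleMeasure ha hθ le_rfl hc)
      (integral_rpow_mul_exp_gammaScaleMeasure ha hθ le_rfl hc)

lemma integral_id_gammaScaleMeasure (ha : 0 < a) (hθ : 0 < θ) :
    Integrable (fun x => x) (gammaScaleMeasure a θ) ∧ ∫ x, x ∂gammaScaleMeasure a θ = a * θ := by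
  simpa [Real.Gamma_add_one ha.ne', (Real.Gamma_pos_of_pos ha).ne'] using
    And.intro (integrable_rpow_mul_exp_gammaScaleMeasure ha hθ zero_le_one (c := 0) (by simp))
      (integral_rpow_mul_exp_gammaScaleMeasure ha hθ zero_le_one (c := 0) (by simp))

end GammaScale

lemma map_sub_const_withDensity_volume (f : ℝ → ℝ≥0∞) (μ : ℝ) :
    (volume.withDensity f).map (· - μ) = volume.withDensity fun y => f (y + μ) := by
  ext s hs
  rw [Measure.map_apply (measurable_sub_const μ) hs, withDensity_apply _ (hs.preimage
    (measurable_sub_const μ)), withDensity_apply _ hs, ← lintegral_indicator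
    (hs.preimage (measurable_sub_const μ)), ← lintegral_indicator hs,
    ← lintegral_sub_right_eq_self (s.indicator fun y => f (y + μ)) μ]
  congr 1
  funext x
  by_cases hx : x - μ ∈ s <;> simp [hx]

lemma map_sub_expLocMeasure (μ θ : ℝ) :
    (expLocMeasure μ θ).map (· - μ) = gammaScaleMeasure 1 θ := by
  rw [expLocMeasure, map_sub_const_withDensity_volume, gammaScaleMeasure]
  congr 1
  funext y
  simp [div_eq_inv_mul, mul_comm]

lemma linexLoss_nonneg (p t : ℝ) : 0 ≤ linexLoss p t := by
  have := Real.add_one_le_exp (p * t)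
  rw [linexLoss]
  linarith

lemma linexRisk_eq_ofReal_integral {Ω : Type*} [MeasurableSpace Ω] {P : Measure Ω}
    {p μ σ : ℝ} {δ : Ω → ℝ} (hint : Integrable (fun ω => linexLoss p ((δ ω - μ) / σ)) P) :
    linexRisk P p μ σ δ = ENNReal.ofReal (∫ ω, linexLoss p ((δ ω - μ) / σ) ∂P) :=
  (ofReal_integral_eq_lintegral_ofReal hint (.of_forall fun _ => linexLoss_nonneg _ _)).symm

section Independent

variable {Ω : Type*} [MeasurableSpace Ω] {P : Measure Ω} [IsProbabilityMeasure P] {Y T : Ω → ℝ}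

lemma integral_linexLoss_add_of_indepFun (hind : IndepFun Y T P) {p β σ : ℝ}
    (hY : Integrable Y P) (hT : Integrable T P)
    (hYexp : Integrable (fun ω => Real.exp (p / σ * Y ω)) P)
    (hTexp : Integrable (fun ω => Real.exp (p * β / σ * T ω)) P) :
    Integrable (fun ω => linexLoss p ((Y ω + β * T ω) / σ)) P ∧
      ∫ ω, linexLoss p ((Y ω + β * T ω) / σ) ∂P =
        (∫ ω, Real.exp (p / σ * Y ω) ∂P) * (∫ ω, Real.exp (p * β / σ * T ω) ∂P) -
          p / σ * ∫ ω, Y ω ∂P - p * β / σ * ∫ ω, T ω ∂P - 1 := by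
  have hind_exp : IndepFun (fun ω => Real.exp (p / σ * Y ω))
      (fun ω => Real.exp (p * β / σ * T ω)) P :=
    hind.comp (φ := fun y => Real.exp (p / σ * y)) (ψ := fun t => Real.exp (p * β / σ * t))
      (by fun_prop) (by fun_prop)
  have hprod : Integrable (fun ω => Real.exp (p / σ * Y ω) * Real.exp (p * β / σ * T ω)) P :=
    hind_exp.integrable_mul hYexp hTexp
  have hmul : ∫ ω, Real.exp (p / σ * Y ω) * Real.exp (p * β / σ * T ω) ∂P =
      (∫ ω, Real.exp (p / σ * Y ω) ∂P) * ∫ ω, Real.exp (p * β / σ * T ω) ∂P :=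
    hind_exp.integral_mul_eq_mul_integral hYexp.aestronglyMeasurable hTexp.aestronglyMeasurable
  have hlin : Integrable (fun ω => p / σ * Y ω + p * β / σ * T ω) P :=
    (hY.const_mul _).add (hT.const_mul _)
  have hloss : (fun ω => linexLoss p ((Y ω + β * T ω) / σ)) = fun ω =>
      Real.exp (p / σ * Y ω) * Real.exp (p * β / σ * T ω) -
        (p / σ * Y ω + p * β / σ * T ω) - 1 := by
    funext ω
    rw [linexLoss, ← Real.exp_add]
    ring_nf
  have hdiff : Integrable (fun ω => Real.exp (p / σ * Y ω) * Real.exp (p * β / σ * T ω) -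
      (p / σ * Y ω + p * β / σ * T ω)) P := hprod.sub hlin
  rw [hloss]
  refine ⟨hdiff.sub (integrable_const 1), ?_⟩
  rw [integral_sub hdiff (integrable_const 1), integral_sub hprod hlin,
    integral_add (hY.const_mul _) (hT.const_mul _), integral_const_mul, integral_const_mul,
    hmul, integral_const, probReal_univ, one_smul]
  ring

end Independent

lemma MeasureTheory.MeasurePreserving.integral_comp_of_aestronglyMeasurable {α β : Type*}
    [MeasurableSpace α] [MeasurableSpace β] {μ : Measure α} {ν : Measure β} {f : α → β}
    (hf : MeasurePreserving f μ ν) {g : β → ℝ} (hg : AEStronglyMeasurable g ν) :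
    ∫ x, g (f x) ∂μ = ∫ y, g y ∂ν := by
  rw [← hf.map_eq] at hg ⊢
  exact (integral_map hf.measurable.aemeasurable hg).symm

lemma linexRisk_expLoc_add_gammaScale {Ω : Type*} [MeasurableSpace Ω]
    {P : Measure Ω} [IsProbabilityMeasure P] {X T : Ω → ℝ} (hX : Measurable X)
    (hT : Measurable T) (hind : IndepFun X T P) {μ σ ν a p β : ℝ} (hσ : 0 < σ) (hν : 0 < ν)
    (ha : 0 < a) (hpν : p < ν) (hβ : p * β < 1)
    (hXlaw : P.map X = expLocMeasure μ (σ / ν)) (hTlaw : P.map T = gammaScaleMeasure a σ) :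
    linexRisk P p μ σ (fun ω => X ω + β * T ω) =
        ENNReal.ofReal (ν / (ν - p) * (1 - p * β) ^ (-a) + a * (1 - p * β) - a - p / ν - 1) ∧
      0 ≤ ν / (ν - p) * (1 - p * β) ^ (-a) + a * (1 - p * β) - a - p / ν - 1 := by
  have hYmp : MeasurePreserving (fun ω => X ω - μ) P (gammaScaleMeasure 1 (σ / ν)) := by
    refine ⟨hX.sub_const μ, ?_⟩
    rw [← map_sub_expLocMeasure μ, ← hXlaw, Measure.map_map (measurable_sub_const μ) hX]
    rfl
  have hTmp : MeasurePreserving T P (gammaScaleMeasure a σ) := ⟨hT, hTlaw⟩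
  have hpY : p / σ * (σ / ν) = p / ν := by field_simp
  have hpT : p * β / σ * σ = p * β := by field_simp
  obtain ⟨hYexp, hYexp_eq⟩ := integral_exp_mul_gammaScaleMeasure one_pos (div_pos hσ hν)
    (c := p / σ) (by rw [hpY, div_lt_one hν]; exact hpν)
  obtain ⟨hTexp, hTexp_eq⟩ := integral_exp_mul_gammaScaleMeasure ha hσ
    (c := p * β / σ) (by rwa [hpT])
  obtain ⟨hYint, hYint_eq⟩ := integral_id_gammaScaleMeasure one_pos (div_pos hσ hν)
  obtain ⟨hTint, hTint_eq⟩ := integral_id_gammaScaleMeasure ha hσ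
  have hindY : IndepFun (fun ω => X ω - μ) T P :=
    hind.comp (measurable_sub_const μ) measurable_id
  have key := integral_linexLoss_add_of_indepFun (σ := σ) (β := β) hindY
    (hYmp.integrable_comp_of_integrable hYint) (hTmp.integrable_comp_of_integrable hTint)
    (hYmp.integrable_comp_of_integrable hYexp) (hTmp.integrable_comp_of_integrable hTexp)
  rw [hYmp.integral_comp_of_aestronglyMeasurable hYexp.aestronglyMeasurable,
    hTmp.integral_comp_of_aestronglyMeasurable hTexp.aestronglyMeasurable,
    hYmp.integral_comp_of_aestronglyMeasurable hYint.aestronglyMeasurable,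
    hTmp.integral_comp_of_aestronglyMeasurable hTint.aestronglyMeasurable,
    hYexp_eq, hTexp_eq, hYint_eq, hTint_eq, hpY, hpT] at key
  have hshift : ∀ ω, X ω - μ + β * T ω = X ω + β * T ω - μ := fun ω => by ring
  simp only [hshift] at key
  obtain ⟨hint, hval⟩ := key
  have hνp : ν - p ≠ 0 := by linarith
  have hval' : ∫ ω, linexLoss p ((X ω + β * T ω - μ) / σ) ∂P =
      ν / (ν - p) * (1 - p * β) ^ (-a) + a * (1 - p * β) - a - p / ν - 1 := by
    rw [hval, Real.rpow_neg_one]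
    field_simp
    ring
  exact ⟨by rw [linexRisk_eq_ofReal_integral hint, hval'],
    hval' ▸ integral_nonneg fun ω => linexLoss_nonneg _ _⟩

lemma mul_rpow_neg_add_mul_lt {m c u : ℝ} (hm : 0 < m) (hc : 0 < c) (hu : 0 < u)
    (hne : u ≠ c ^ (1 / (m + 1))) :
    c * (c ^ (1 / (m + 1))) ^ (-m) + m * c ^ (1 / (m + 1)) < c * u ^ (-m) + m * u := by
  set w := c ^ (1 / (m + 1)) with hw_def
  have hm1 : 0 < m + 1 := by linarith
  have hw : 0 < w := Real.rpow_pos_of_pos hc _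
  have hcw : c = w ^ (m + 1) := by
    rw [hw_def, ← Real.rpow_mul hc.le, one_div_mul_cancel hm1.ne', Real.rpow_one]
  have hmin : c * w ^ (-m) + m * w = (m + 1) * w := by
    rw [hcw, ← Real.rpow_add hw, show m + 1 + -m = 1 by ring, Real.rpow_one]
    ring
  have hgeom : (c * u ^ (-m)) ^ (1 / (m + 1)) * u ^ (m / (m + 1)) = w := by
    rw [Real.mul_rpow hc.le (by positivity), ← Real.rpow_mul hu.le, mul_assoc,
      ← Real.rpow_add hu, show -m * (1 / (m + 1)) + m / (m + 1) = 0 by ring, Real.rpow_zero,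
      mul_one]
  have hdiff : c * u ^ (-m) ≠ u := by
    intro h
    have hcu : c = u ^ (m + 1) :=
      calc c = c * u ^ (-m) * u ^ m := by
            rw [mul_assoc, ← Real.rpow_add hu, neg_add_cancel, Real.rpow_zero, mul_one]
        _ = u ^ (m + 1) := by rw [h, Real.rpow_add hu, Real.rpow_one, mul_comm]
    apply hne
    rw [hw_def, hcu, ← Real.rpow_mul hu.le, mul_one_div_cancel hm1.ne', Real.rpow_one]
  have hamgm := (Real.geom_mean_lt_arith_mean2_weighted_iff_of_pos (w₁ := 1 / (m + 1))
    (by positivity) (div_pos hm hm1) (by positivity) hu.le (by field_simp; ring)).mpr hdiff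
  rw [hgeom] at hamgm
  rw [hmin]
  have hmean : 1 / (m + 1) * (c * u ^ (-m)) + m / (m + 1) * u =
      (c * u ^ (-m) + m * u) / (m + 1) := by
    field_simp
  rw [hmean, lt_div_iff₀ hm1] at hamgm
  linarith

theorem stmt_9_general {Ω : Type*} [MeasurableSpace Ω] (P : Measure Ω) [IsProbabilityMeasure P]
    (k : ℕ) (n : Fin k → ℕ) (hn : ∀ j, 2 ≤ n j)
    (i : Fin k) (p : ℝ) (hp : p ≠ 0) (hpi : p < n i)
    (μ σ : ℝ) (hσ : 0 < σ)
    (X T : Ω → ℝ) (hX : Measurable X) (hT : Measurable T)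
    (hindep : IndepFun X T P)
    (hXlaw : Measure.map X P = expLocMeasure μ (σ / n i))
    (hTlaw : Measure.map T P = gammaScaleMeasure ((∑ j, (n j : ℝ)) - k) σ) :
    (∀ β : ℝ, p * β < 1 →
      linexRisk P p μ σ (fun ω => X ω + β * T ω) ≠ ⊤) ∧
    p * ((1 / p) * (1 - ((n i : ℝ) / ((n i : ℝ) - p)) ^
        ((1 : ℝ) / ((∑ j, (n j : ℝ)) - k + 1)))) < 1 ∧
    (∀ β : ℝ, p * β < 1 →
      β ≠ (1 / p) * (1 - ((n i : ℝ) / ((n i : ℝ) - p)) ^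
          ((1 : ℝ) / ((∑ j, (n j : ℝ)) - k + 1))) →
      linexRisk P p μ σ
          (fun ω => X ω + ((1 / p) * (1 - ((n i : ℝ) / ((n i : ℝ) - p)) ^
              ((1 : ℝ) / ((∑ j, (n j : ℝ)) - k + 1)))) * T ω) <
        linexRisk P p μ σ (fun ω => X ω + β * T ω)) := by
  have hν : (0 : ℝ) < n i := by have := hn i; positivity
  have hm : 0 < (∑ j, (n j : ℝ)) - k := by
    have hsum : ∑ j, ((n j : ℝ) - 1) = (∑ j, (n j : ℝ)) - k := by
      simp [Finset.sum_sub_distrib]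
    rw [← hsum]
    refine Finset.sum_pos (fun j _ => ?_) ⟨i, Finset.mem_univ i⟩
    have : (2 : ℝ) ≤ n j := by exact_mod_cast hn j
    linarith
  have hc : 0 < (n i : ℝ) / (n i - p) := div_pos hν (sub_pos.2 hpi)
  set w := ((n i : ℝ) / (n i - p)) ^ ((1 : ℝ) / ((∑ j, (n j : ℝ)) - k + 1))
  have hw : 0 < w := Real.rpow_pos_of_pos hc _
  have hpβ₀ : p * ((1 / p) * (1 - w)) = 1 - w := by field_simp
  have risk := fun β (hβ : p * β < 1) =>
    linexRisk_expLoc_add_gammaScale hX hT hindep hσ hν hm hpi hβ hXlaw hTlaw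
  have hβ₀ : p * ((1 / p) * (1 - w)) < 1 := by rw [hpβ₀]; linarith
  refine ⟨fun β hβ => (risk β hβ).1 ▸ ENNReal.ofReal_ne_top, hβ₀, fun β hβ hne => ?_⟩
  have hune : 1 - p * β ≠ w := fun h => hne (by field_simp; linarith)
  rw [(risk β hβ).1, (risk _ hβ₀).1, ENNReal.ofReal_lt_ofReal_iff_of_nonneg (risk _ hβ₀).2,
    hpβ₀, sub_sub_cancel]
  linarith [mul_rpow_neg_add_mul_lt hm hc (by linarith) hune]

/-- In the common-unknown-scale model, for `X ~ Exp(μ, σ/nᵢ)` and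
`T ~ Gamma(n−k, σ)` independent, the Linex risk of `X + β·T` is finite for `p·β < 1` and
uniquely minimized there at `β₀ᵢ = (1/p)(1 − (nᵢ/(nᵢ−p))^{1/(n−k+1)})`. -/
theorem stmt_9 {Ω : Type*} [MeasurableSpace Ω] (P : Measure Ω) [IsProbabilityMeasure P]
    (k : ℕ) (hk : 2 ≤ k) (n : Fin k → ℕ) (hn : ∀ j, 2 ≤ n j)
    (i : Fin k) (p : ℝ) (hp : p ≠ 0) (hpi : p < n i)
    (μ σ : ℝ) (hσ : 0 < σ)
    (X T : Ω → ℝ) (hX : Measurable X) (hT : Measurable T)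
    (hindep : IndepFun X T P)
    (hXlaw : Measure.map X P = expLocMeasure μ (σ / n i))
    (hTlaw : Measure.map T P = gammaScaleMeasure ((∑ j, (n j : ℝ)) - k) σ) :
    (∀ β : ℝ, p * β < 1 →
      linexRisk P p μ σ (fun ω => X ω + β * T ω) ≠ ⊤) ∧
    p * ((1 / p) * (1 - ((n i : ℝ) / ((n i : ℝ) - p)) ^
        ((1 : ℝ) / ((∑ j, (n j : ℝ)) - k + 1)))) < 1 ∧
    (∀ β : ℝ, p * β < 1 →
      β ≠ (1 / p) * (1 - ((n i : ℝ) / ((n i : ℝ) - p)) ^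
          ((1 : ℝ) / ((∑ j, (n j : ℝ)) - k + 1))) →
      linexRisk P p μ σ
          (fun ω => X ω + ((1 / p) * (1 - ((n i : ℝ) / ((n i : ℝ) - p)) ^
              ((1 : ℝ) / ((∑ j, (n j : ℝ)) - k + 1)))) * T ω) <
        linexRisk P p μ σ (fun ω => X ω + β * T ω)) :=
  stmt_9_general P k n hn i p hp hpi μ σ hσ X T hX hT hindep hXlaw hTlaw
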